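/- Let (u,v) be an arc that is t-useless, i.e., for every scenario x ∈ {0,1}^Φ, (u,v) lies on no shortest path from u to t under the arc lengths determined by x. Let G' be the graph obtained from G by deleting (u,v). Then for every scenario x, the contribution f^x_t(G) := Σ_{s∈V} w_s w_t Π^x_{st} of sink t to ECA is unchanged: f^x_t(G) = f^x_t(G'). -/

import Mathlib

open scoped Classical ENNReal

def IsPath {V : Type*} (adj : V → V → Prop) : V → V → List V → Prop
  | _, _, [] => False
  | s, t, [a] => a = s ∧ a = t
  | s, t, a :: b :: p => a = s ∧ adj a b ∧ IsPath adj b t (b :: p)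

noncomputable def epathLen {V : Type*} (len : V → V → ℝ) : List V → ℝ≥0∞
  | [] => 0
  | [_] => 0
  | a :: b :: p => ENNReal.ofReal (len a b) + epathLen len (b :: p)

noncomputable def gdist {V : Type*} (adj : V → V → Prop) (len : V → V → ℝ) (s t : V) : ℝ≥0∞ :=
  sInf {x | ∃ p, IsPath adj s t p ∧ epathLen len p = x}

noncomputable def slen {V : Type*} (Φ : Set (V × V)) (l lo : V → V → ℝ)
    (x : V × V → Bool) (a b : V) : ℝ :=
  if (a, b) ∈ Φ ∧ x (a, b) = true then lo a b else l a b

/-- The arc `(u,v)` is used by the vertex-list path `p`. -/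
def usesArc {V : Type*} (p : List V) (u v : V) : Prop := (u, v) ∈ p.zip p.tail

/-- The probability of connection `Π^x_{st} = exp(−d_x(s,t))` (0 if no path). -/
noncomputable def connOf (d : ℝ≥0∞) : ℝ := if d = ⊤ then 0 else Real.exp (-d.toReal)

/-!
A shortest `s`–`t` path exists because cycles can be cut out, so only the finitely many paths with
at most `|V|` vertices matter. Deleting `(u,v)` can only increase distances. Conversely, follow any
`s`–`t` path until it reaches the arc `(u,v)`. At that point, replace the rest of it by a shortest
`u`–`t` path, which avoids `(u,v)` because the arc is `t`-useless. The resulting path does not get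
longer, so `d_x(s,t)` is the same in `G` and `G'`, and then so is every term of `f^x_t`.
-/

def deleteArc {V : Type*} (adj : V → V → Prop) (u v : V) : V → V → Prop :=
  fun a b => adj a b ∧ (a, b) ≠ (u, v)

section Paths

variable {V : Type*} {adj : V → V → Prop} {len : V → V → ℝ}

theorem IsPath.mono {adj' : V → V → Prop} (h : ∀ a b, adj a b → adj' a b) :
    ∀ {p : List V} {s t : V}, IsPath adj s t p → IsPath adj' s t p
  | [], _, _, hp => hp.elim
  | [_], _, _, hp => hp
  | _ :: b :: p, _, _, hp => ⟨hp.1, h _ _ hp.2.1, IsPath.mono h (p := b :: p) hp.2.2⟩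

theorem IsPath.exists_eq_cons : ∀ {p : List V} {s t : V}, IsPath adj s t p → ∃ q, p = s :: q
  | [], _, _, hp => hp.elim
  | [_], _, _, hp => ⟨[], by rw [hp.1]⟩
  | _ :: b :: p, _, _, hp => ⟨b :: p, by rw [hp.1]⟩

theorem IsPath.deleteArc {u v : V} :
    ∀ {p : List V} {s t : V}, IsPath adj s t p → ¬ usesArc p u v →
      IsPath (deleteArc adj u v) s t p
  | [], _, _, hp, _ => hp.elim
  | [_], _, _, hp, _ => hp
  | a :: b :: p, _, _, hp, hn => by
    simp only [usesArc, List.tail, List.zip_cons_cons, List.mem_cons, not_or] at hn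
    exact ⟨hp.1, ⟨hp.2.1, Ne.symm hn.1⟩, IsPath.deleteArc (p := b :: p) hp.2.2 hn.2⟩

theorem isPath_append_iff {s t a : V} :
    ∀ {A B : List V}, IsPath adj s t (A ++ a :: B) ↔
      IsPath adj s a (A ++ [a]) ∧ IsPath adj a t (a :: B)
  | [], [] => by simp only [IsPath, List.nil_append]; tauto
  | [], _ :: _ => by simp only [IsPath, List.nil_append]; tauto
  | [_], [] => by simp only [IsPath, List.cons_append, List.nil_append]; tauto
  | [_], _ :: _ => by simp only [IsPath, List.cons_append, List.nil_append]; tauto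
  | c :: d :: A, B => by
    simp only [List.cons_append, IsPath]
    rw [← List.cons_append, ← List.cons_append, isPath_append_iff]
    tauto

theorem epathLen_append (a : V) :
    ∀ A B : List V, epathLen len (A ++ a :: B) = epathLen len (A ++ [a]) + epathLen len (a :: B)
  | [], _ => by simp [epathLen]
  | [_], _ => by simp [epathLen]
  | c :: d :: A, B => by
    simp only [List.cons_append, epathLen]
    rw [← List.cons_append, ← List.cons_append, epathLen_append a (d :: A) B, add_assoc]

theorem IsPath.cutCycle {s t a : V} {A B C : List V}
    (hp : IsPath adj s t (A ++ a :: (B ++ a :: C))) : IsPath adj s t (A ++ a :: C) := by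
  obtain ⟨hA, hBC⟩ := isPath_append_iff.mp hp
  rw [← List.cons_append] at hBC
  exact isPath_append_iff.mpr ⟨hA, (isPath_append_iff.mp hBC).2⟩

theorem epathLen_cutCycle_le (a : V) (A B C : List V) :
    epathLen len (A ++ a :: C) ≤ epathLen len (A ++ a :: (B ++ a :: C)) := by
  rw [epathLen_append a A C, epathLen_append a A (B ++ a :: C)]
  gcongr
  rw [← List.cons_append, epathLen_append a (a :: B) C]
  exact le_add_self

theorem List.exists_eq_append_cons_append_cons_of_not_nodup :
    ∀ {l : List V}, ¬ l.Nodup → ∃ a A B C, l = A ++ a :: (B ++ a :: C)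
  | [], h => absurd List.nodup_nil h
  | x :: xs, h => by
    by_cases hx : x ∈ xs
    · obtain ⟨B, C, rfl⟩ := List.append_of_mem hx
      exact ⟨x, [], B, C, rfl⟩
    · obtain ⟨a, A, B, C, rfl⟩ :=
        exists_eq_append_cons_append_cons_of_not_nodup fun hn => h (List.nodup_cons.mpr ⟨hx, hn⟩)
      exact ⟨a, x :: A, B, C, rfl⟩

theorem IsPath.exists_length_le_card [Fintype V] {s t : V} (p : List V) (hp : IsPath adj s t p) :
    ∃ q, IsPath adj s t q ∧ q.length ≤ Fintype.card V ∧ epathLen len q ≤ epathLen len p := by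
  by_cases hnd : p.Nodup
  · exact ⟨p, hp, hnd.length_le_card, le_rfl⟩
  obtain ⟨a, A, B, C, hpeq⟩ := List.exists_eq_append_cons_append_cons_of_not_nodup hnd
  rw [hpeq] at hp ⊢
  obtain ⟨q, hq, hqcard, hqlen⟩ := IsPath.exists_length_le_card _ hp.cutCycle
  exact ⟨q, hq, hqcard, hqlen.trans (epathLen_cutCycle_le a A B C)⟩
termination_by p.length
decreasing_by rw [hpeq]; simp only [List.length_append, List.length_cons]; omega

theorem gdist_le_epathLen {s t : V} {p : List V} (hp : IsPath adj s t p) :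
    gdist adj len s t ≤ epathLen len p :=
  sInf_le ⟨p, hp, rfl⟩

theorem gdist_le_add_gdist {s b t : V} (hsb : adj s b) :
    gdist adj len s t ≤ ENNReal.ofReal (len s b) + gdist adj len b t := by
  unfold gdist
  rw [ENNReal.add_sInf]
  refine le_iInf₂ ?_
  rintro _ ⟨q, hq, rfl⟩
  obtain ⟨q, rfl⟩ := hq.exists_eq_cons
  exact gdist_le_epathLen (p := s :: b :: q) ⟨rfl, hsb, hq⟩

theorem exists_isPath_epathLen_eq_gdist [Fintype V] {s t : V} {p : List V}
    (hp : IsPath adj s t p) : ∃ q, IsPath adj s t q ∧ epathLen len q = gdist adj len s t := by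
  let short := {q : List V | IsPath adj s t q ∧ q.length ≤ Fintype.card V}
  have hfin : short.Finite := (List.finite_length_le V _).subset fun q hq => hq.2
  obtain ⟨p', hp', hp'card, -⟩ := hp.exists_length_le_card (len := len) p
  obtain ⟨q, ⟨hq, -⟩, hmin⟩ := Set.exists_min_image short (epathLen len) hfin ⟨p', hp', hp'card⟩
  refine ⟨q, hq, le_antisymm (le_sInf ?_) (gdist_le_epathLen hq)⟩
  rintro _ ⟨r, hr, rfl⟩
  obtain ⟨r', hr', hr'card, hr'len⟩ := hr.exists_length_le_card (len := len) r
  exact (hmin r' ⟨hr', hr'card⟩).trans hr'len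

end Paths

section UselessArc

variable {V : Type*} [Fintype V] {adj : V → V → Prop} {len : V → V → ℝ} {u v t : V}

theorem gdist_deleteArc_le_epathLen
    (huseless : ∀ p, IsPath adj u t p → epathLen len p = gdist adj len u t → ¬ usesArc p u v) :
    ∀ {p : List V} {s : V}, IsPath adj s t p → gdist (deleteArc adj u v) len s t ≤ epathLen len p
  | [], _, hp => hp.elim
  | [_], _, hp => gdist_le_epathLen (p := [_]) hp
  | a :: b :: p, s, hp => by
    obtain ⟨rfl, hab, hbp⟩ := hp
    by_cases harc : (a, b) = (u, v)
    · obtain ⟨rfl, -⟩ := Prod.mk.inj harc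
      obtain ⟨q, hq, hqlen⟩ := exists_isPath_epathLen_eq_gdist (len := len) (p := a :: b :: p)
        ⟨rfl, hab, hbp⟩
      calc gdist (deleteArc adj a v) len a t
          ≤ epathLen len q := gdist_le_epathLen (hq.deleteArc (huseless q hq hqlen))
        _ = gdist adj len a t := hqlen
        _ ≤ epathLen len (a :: b :: p) := gdist_le_epathLen ⟨rfl, hab, hbp⟩
    · calc gdist (deleteArc adj u v) len a t
          ≤ ENNReal.ofReal (len a b) + gdist (deleteArc adj u v) len b t :=
            gdist_le_add_gdist ⟨hab, harc⟩
        _ ≤ epathLen len (a :: b :: p) :=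
            add_le_add le_rfl (gdist_deleteArc_le_epathLen huseless hbp)

theorem gdist_deleteArc_eq
    (huseless : ∀ p, IsPath adj u t p → epathLen len p = gdist adj len u t → ¬ usesArc p u v)
    (s : V) : gdist (deleteArc adj u v) len s t = gdist adj len s t := by
  refine le_antisymm (le_sInf ?_) (sInf_le_sInf ?_)
  · rintro _ ⟨p, hp, rfl⟩
    exact gdist_deleteArc_le_epathLen huseless hp
  · rintro _ ⟨p, hp, rfl⟩
    exact ⟨p, hp.mono fun _ _ h => h.1, rfl⟩

end UselessArc

theorem stmt_5_general {V : Type*} [Fintype V] (adj : V → V → Prop) (Φ : Set (V × V))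
    (l lo : V → V → ℝ)
    (w : V → ℝ) (u v t : V)
    (huseless : ∀ x : V × V → Bool, ∀ p, IsPath adj u t p →
      epathLen (slen Φ l lo x) p = gdist adj (slen Φ l lo x) u t → ¬ usesArc p u v) :
    ∀ x : V × V → Bool,
      (∑ s : V, w s * w t * connOf (gdist adj (slen Φ l lo x) s t))
        = ∑ s : V, w s * w t *
            connOf (gdist (fun a b => adj a b ∧ (a, b) ≠ (u, v)) (slen Φ l lo x) s t) := by
  intro x
  refine Finset.sum_congr rfl fun s _ => ?_
  rw [← gdist_deleteArc_eq (huseless x) s]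
  rfl

/-- If the arc `(u,v)` is `t`-useless — i.e. for every scenario `x ∈ {0,1}^Φ` it lies on no
shortest path from `u` to `t` — then deleting it leaves the contribution
`f^x_t(G) = Σ_s w_s w_t Π^x_{st}` of the sink `t` to ECA unchanged, for every scenario. -/
theorem stmt_5 {V : Type*} [Fintype V] (adj : V → V → Prop) (Φ : Set (V × V))
    (l lo : V → V → ℝ) (h0 : ∀ a b, 0 ≤ lo a b) (hle : ∀ a b, lo a b ≤ l a b)
    (w : V → ℝ) (hw : ∀ a, 0 ≤ w a) (u v t : V) (huv : adj u v)
    (huseless : ∀ x : V × V → Bool, ∀ p, IsPath adj u t p →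
      epathLen (slen Φ l lo x) p = gdist adj (slen Φ l lo x) u t → ¬ usesArc p u v) :
    ∀ x : V × V → Bool,
      (∑ s : V, w s * w t * connOf (gdist adj (slen Φ l lo x) s t))
        = ∑ s : V, w s * w t *
            connOf (gdist (fun a b => adj a b ∧ (a, b) ≠ (u, v)) (slen Φ l lo x) s t) :=
  stmt_5_general adj Φ l lo w u v t huseless
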